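/- Let s be a fully normalized binary string of length n ≥ 2. Then the grouping distance of s under restricted prefix block-interchanges satisfies d^g_rpbi(s) = ⌈(n−2)/4⌉. -/

import Mathlib

open List

/-- Normalization of a string: repeatedly merge adjacent equal symbols into one
symbol until no two adjacent symbols are equal. -/
def normalizeStr {α : Type*} [DecidableEq α] (l : List α) : List α :=
  l.destutter (· ≠ ·)

/-- A string is grouped if all occurrences of each symbol are consecutive,
i.e. after merging adjacent equal symbols every symbol occurs at most once. -/
def Grouped {α : Type*} [DecidableEq α] (l : List α) : Prop :=
  (normalizeStr l).Nodup

/-- The prefix block-interchange β(1,x,y,z) (1-based indices, 1 ≤ x < y ≤ z ≤ n),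
before normalization: s[y]…s[z] s[x+1]…s[y−1] s[1]…s[x] s[z+1]…s[n]. -/
def pbiRaw {α : Type*} (l : List α) (x y z : ℕ) : List α :=
  (l.drop (y - 1)).take (z - y + 1) ++ (l.drop x).take (y - 1 - x) ++
    l.take x ++ l.drop z

/-- Prefix block-interchange β(1,x,y,z) followed by normalization. -/
def pbi {α : Type*} [DecidableEq α] (l : List α) (x y z : ℕ) : List α :=
  normalizeStr (pbiRaw l x y z)

/-- One prefix block-interchange operation transforming `s` into `t`. -/
def PbiStep {α : Type*} [DecidableEq α] (s t : List α) : Prop :=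
  ∃ x y z, 1 ≤ x ∧ x < y ∧ y ≤ z ∧ z ≤ s.length ∧ t = pbi s x y z

/-- A restricted prefix block-interchange (2 ≤ x < y ≤ z ≤ n) keeps the first
symbol fixed, before normalization:
s[1] s[y]…s[z] s[x+1]…s[y−1] s[2]…s[x] s[z+1]…s[n]. -/
def rpbiRaw {α : Type*} (l : List α) (x y z : ℕ) : List α :=
  l.take 1 ++ (l.drop (y - 1)).take (z - y + 1) ++ (l.drop x).take (y - 1 - x) ++
    (l.drop 1).take (x - 1) ++ l.drop z

/-- Restricted prefix block-interchange followed by normalization. -/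
def rpbi {α : Type*} [DecidableEq α] (l : List α) (x y z : ℕ) : List α :=
  normalizeStr (rpbiRaw l x y z)

/-- One restricted prefix block-interchange operation transforming `s` into `t`. -/
def RpbiStep {α : Type*} [DecidableEq α] (s t : List α) : Prop :=
  ∃ x y z, 2 ≤ x ∧ x < y ∧ y ≤ z ∧ z ≤ s.length ∧ t = rpbi s x y z

/-- `StepsTo R k s t` : `t` is obtained from `s` by exactly `k` `R`-operations. -/
def StepsTo {α : Type*} (R : List α → List α → Prop) : ℕ → List α → List α → Prop
  | 0, s, t => s = t
  | k + 1, s, t => ∃ u, R s u ∧ StepsTo R k u t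

/-! Normalization can only merge symbols across the four junctions between the five blocks that a
restricted prefix block-interchange rearranges, so each operation shortens a fully normalized string
by at most four, while a grouped normalized binary string has length at most two. Conversely, on an
alternating string the interchange with `(x, y, z) = (3, 5, 6)` turns `a b a b a b a …` into
`a a b b b a a …`, which normalizes to the alternating string four symbols shorter; alternating
strings of length at most six need at most one operation. -/

namespace List

variable {α : Type*} [DecidableEq α]

theorem length_destutter_add_length_destutter_le (l₁ l₂ : List α) :
    (l₁.destutter (· ≠ ·)).length + (l₂.destutter (· ≠ ·)).length ≤
      ((l₁ ++ l₂).destutter (· ≠ ·)).length + 1 := by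
  -- `destutter` is a longest `≠`-chain sublist, so we exhibit a chain sublist `d₁ ++ d₂` of
  -- `l₁ ++ l₂`, dropping the head of `d₂` when it equals the last symbol of `d₁`.
  set d₁ := l₁.destutter (· ≠ ·)
  have hchain₁ : d₁.IsChain (· ≠ ·) := isChain_destutter _ l₁
  have hsub : d₁ ++ l₂.destutter (· ≠ ·) <+ l₁ ++ l₂ :=
    (destutter_sublist _ l₁).append (destutter_sublist _ l₂)
  rcases hd₂ : l₂.destutter (· ≠ ·) with _ | ⟨b, d₂⟩ <;> rw [hd₂] at hsub
  · simpa using (hchain₁.length_le_length_destutter_ne (by simpa using hsub)).trans (Nat.le_succ _)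
  have hchain₂ : (b :: d₂).IsChain (· ≠ ·) := hd₂ ▸ isChain_destutter _ l₂
  by_cases hlast : b ∈ d₁.getLast?
  · have hchain : (d₁ ++ d₂).IsChain (· ≠ ·) := by
      refine hchain₁.append hchain₂.tail fun x hx y hy => ?_
      rw [Option.mem_unique hx hlast]
      exact (isChain_cons.1 hchain₂).1 y hy
    have := hchain.length_le_length_destutter_ne
      (((sublist_cons_self b d₂).append_left d₁).trans hsub)
    simp only [length_append, length_cons] at this ⊢
    omega
  · have hchain : (d₁ ++ b :: d₂).IsChain (· ≠ ·) :=
      hchain₁.append hchain₂ fun x hx y hy => by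
        simp only [head?_cons, Option.mem_def, Option.some.injEq] at hy
        exact fun hxy => hlast (hy ▸ hxy ▸ hx)
    have := hchain.length_le_length_destutter_ne hsub
    simp only [length_append] at this ⊢
    omega

theorem length_destutter_add_sum_le (l : List α) (L : List (List α)) :
    (l.destutter (· ≠ ·)).length + (L.map fun m => (m.destutter (· ≠ ·)).length).sum ≤
      ((l ++ L.flatten).destutter (· ≠ ·)).length + L.length := by
  induction L generalizing l with
  | nil => simp
  | cons m L ih =>
    have := length_destutter_add_length_destutter_le l m
    have := ih (l ++ m)
    simp only [map_cons, sum_cons, flatten_cons, length_cons, ← append_assoc] at *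
    omega

end List

theorem StepsTo.single {α : Type*} {R : List α → List α → Prop} {s t : List α} (h : R s t) :
    StepsTo R 1 s t :=
  ⟨t, h, rfl⟩

section Steps

variable {α : Type*} [DecidableEq α]

theorem rpbiStep_rpbi {l : List α} (x y z : ℕ) (h : 2 ≤ x ∧ x < y ∧ y ≤ z ∧ z ≤ l.length) :
    RpbiStep l (rpbi l x y z) :=
  ⟨x, y, z, h.1, h.2.1, h.2.2.1, h.2.2.2, rfl⟩

theorem RpbiStep.isChain {u v : List α} (h : RpbiStep u v) : v.IsChain (· ≠ ·) := by
  obtain ⟨x, y, z, -, -, -, -, rfl⟩ := h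
  exact isChain_destutter _ _

theorem RpbiStep.length_le_add_four {u v : List α} (hu : u.IsChain (· ≠ ·)) (h : RpbiStep u v) :
    u.length ≤ v.length + 4 := by
  obtain ⟨x, y, z, hx, hxy, hyz, hz, rfl⟩ := h
  have := length_destutter_add_sum_le (u.take 1)
    [(u.drop (y - 1)).take (z - y + 1), (u.drop x).take (y - 1 - x), (u.drop 1).take (x - 1),
      u.drop z]
  simp only [map_cons, map_nil, sum_cons, sum_nil, flatten_cons, flatten_nil, append_nil,
    length_cons, length_nil, destutter_of_isChain _ _ (hu.take _),
    destutter_of_isChain _ _ ((hu.drop _).take _), destutter_of_isChain _ _ (hu.drop _),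
    length_take, length_drop] at this
  simp only [rpbi, rpbiRaw, normalizeStr, append_assoc]
  omega

instance : DecidablePred (Grouped (α := α)) :=
  fun l => inferInstanceAs (Decidable (normalizeStr l).Nodup)

theorem Grouped.length_le_card [Fintype α] {t : List α} (ht : t.IsChain (· ≠ ·))
    (hg : Grouped t) : t.length ≤ Fintype.card α := by
  rw [Grouped, normalizeStr, destutter_of_isChain _ _ ht] at hg
  exact hg.length_le_card

theorem StepsTo.length_le [Fintype α] :
    ∀ {k : ℕ} {u t : List α}, u.IsChain (· ≠ ·) → StepsTo RpbiStep k u t → Grouped t →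
      u.length ≤ 4 * k + Fintype.card α
  | 0, _, _, hu, rfl, hg => by simpa using hg.length_le_card hu
  | k + 1, _, _, hu, ⟨_, hstep, hrest⟩, hg => by
    have := StepsTo.length_le hstep.isChain hrest hg
    have := hstep.length_le_add_four hu
    omega

end Steps

@[simp] theorem Fin.two_add_one_add_one (x : Fin 2) : x + 1 + 1 = x := by
  fin_cases x <;> rfl

def alternating : Fin 2 → ℕ → List (Fin 2)
  | _, 0 => []
  | a, n + 1 => a :: alternating (a + 1) n

@[simp] theorem length_alternating (a : Fin 2) (n : ℕ) : (alternating a n).length = n := by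
  induction n generalizing a <;> simp [alternating, *]

theorem isChain_alternating (a : Fin 2) (n : ℕ) : (alternating a n).IsChain (· ≠ ·) := by
  induction n generalizing a with
  | zero => simp [alternating]
  | succ n ih =>
    cases n with
    | zero => simp [alternating]
    | succ n => exact isChain_cons_cons.2 ⟨by simp, ih (a + 1)⟩

theorem eq_alternating_of_isChain :
    ∀ {a : Fin 2} {l : List (Fin 2)}, (a :: l).IsChain (· ≠ ·) → a :: l = alternating a (l.length + 1)
  | _, [], _ => rfl
  | a, b :: l, h => by
    obtain ⟨hab, h⟩ := isChain_cons_cons.1 h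
    have hb : b = a + 1 := by fin_cases a <;> fin_cases b <;> simp_all
    rw [length_cons, eq_alternating_of_isChain h, hb]
    rfl

theorem rpbi_alternating (a : Fin 2) (n : ℕ) :
    rpbi (alternating a (n + 7)) 3 5 6 = alternating a (n + 3) := by
  simpa [rpbi, rpbiRaw, normalizeStr, alternating, destutter_cons_cons]
    using isChain_alternating a (n + 1)

theorem exists_stepsTo_grouped_alternating (a : Fin 2) :
    ∀ n : ℕ, ∃ t, StepsTo RpbiStep ((n + 1) / 4) (alternating a n) t ∧ Grouped t
  | 0 => ⟨_, rfl, by fin_cases a <;> decide⟩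
  | 1 => ⟨_, rfl, by fin_cases a <;> decide⟩
  | 2 => ⟨_, rfl, by fin_cases a <;> decide⟩
  | 3 => ⟨_, .single (rpbiStep_rpbi 2 3 3 (by simp)), by fin_cases a <;> decide⟩
  | 4 => ⟨_, .single (rpbiStep_rpbi 2 3 3 (by simp)), by fin_cases a <;> decide⟩
  | 5 => ⟨_, .single (rpbiStep_rpbi 2 5 5 (by simp)), by fin_cases a <;> decide⟩
  | 6 => ⟨_, .single (rpbiStep_rpbi 2 5 5 (by simp)), by fin_cases a <;> decide⟩
  | n + 7 => by
    obtain ⟨t, ht, hg⟩ := exists_stepsTo_grouped_alternating a (n + 3)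
    rw [show (n + 7 + 1) / 4 = (n + 3 + 1) / 4 + 1 by omega]
    exact ⟨t, ⟨_, rpbi_alternating a n ▸ rpbiStep_rpbi 3 5 6 (by simp), ht⟩, hg⟩

theorem exists_stepsTo_grouped {s : List (Fin 2)} (hs : s.IsChain (· ≠ ·)) :
    ∃ t, StepsTo RpbiStep ((s.length + 1) / 4) s t ∧ Grouped t := by
  cases s with
  | nil => exact exists_stepsTo_grouped_alternating 0 0
  | cons a l =>
    simpa [← eq_alternating_of_isChain hs] using exists_stepsTo_grouped_alternating a (l.length + 1)

theorem stmt_8_general (s : List (Fin 2)) (hnorm : s.Chain' (· ≠ ·)) :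
    IsLeast {k | ∃ t, StepsTo RpbiStep k s t ∧ Grouped t}
      ((s.length - 2 + 3) / 4) := by
  have hk : (s.length - 2 + 3) / 4 = (s.length + 1) / 4 := by omega
  refine ⟨hk ▸ exists_stepsTo_grouped hnorm, ?_⟩
  rintro k ⟨t, hst, hg⟩
  have := StepsTo.length_le hnorm hst hg
  simp only [Fintype.card_fin] at this
  omega

/-- For a fully normalized binary string s of length n ≥ 2, the
grouping distance under restricted prefix block-interchanges equals ⌈(n−2)/4⌉. -/
theorem stmt_8 (s : List (Fin 2)) (hnorm : s.Chain' (· ≠ ·)) (hn : 2 ≤ s.length) :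
    IsLeast {k | ∃ t, StepsTo RpbiStep k s t ∧ Grouped t}
      ((s.length - 2 + 3) / 4) :=
  stmt_8_general s hnorm
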